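/- arXiv:1506.07940 — 11 statements merged into one kernel-verified Lean document; each statement's English description precedes it below -/
import Mathlib

section
/- For every integer m ≥ 0, the function μ ↦ 2·cos μ − μ·sin μ has exactly one zero in the open interval (mπ, (m+1)π); equivalently, for each integer k ≥ 1 there exists a unique μ_k ∈ ((k−1)π, kπ) satisfying the characteristic equation 2 cos μ_k = μ_k sin μ_k (i.e. μ_k = 2 cot μ_k). Consequently the sequence (μ_k) is strictly increasing and no μ_k is an integer multiple of π. -/
open Real Set

/-!
On each interval `(a, a + π)` with `sin a = 0` the sine does not vanish, so there the equation
`c cos μ = μ sin μ` (with `c > 0`) reads `c cot μ - μ = 0`. The left side has derivative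
`-c / sin² μ - 1 < 0`, hence has at most one zero, while `c cos μ - μ sin μ` takes the values
`c cos a` and `-c cos a = ∓c` at the endpoints, hence has a zero by the intermediate value theorem.
-/

lemma exists_mem_Ioo_eq_zero_of_mul_neg {α : Type*} [ConditionallyCompleteLinearOrder α]
    [TopologicalSpace α] [OrderTopology α] [DenselyOrdered α] {f : α → ℝ} {a b : α}
    (hab : a ≤ b) (hf : ContinuousOn f (Icc a b)) (h : f a * f b < 0) :
    ∃ x ∈ Ioo a b, f x = 0 := by
  rcases mul_neg_iff.1 h with ⟨ha, hb⟩ | ⟨ha, hb⟩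
  · exact intermediate_value_Ioo' hab hf ⟨hb, ha⟩
  · exact intermediate_value_Ioo hab hf ⟨ha, hb⟩

namespace Real

lemma hasDerivAt_cot {x : ℝ} (hx : sin x ≠ 0) : HasDerivAt cot (-1 / sin x ^ 2) x := by
  have hquot := (hasDerivAt_cos x).div (hasDerivAt_sin x) hx
  have hcot : cot = cos / sin := funext cot_eq_cos_div_sin
  rw [hcot]
  refine hquot.congr_deriv ?_
  rw [← sin_sq_add_cos_sq x]
  ring

lemma sin_ne_zero_of_mem_Ioo_add_pi {a x : ℝ} (ha : sin a = 0) (hx : x ∈ Ioo a (a + π)) :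
    sin x ≠ 0 := by
  have hcos : cos a ≠ 0 := by
    rcases sin_eq_zero_iff_cos_eq.1 ha with h | h <;> simp [h]
  have hsin : 0 < sin (x - a) := sin_pos_of_pos_of_lt_pi (by linarith [hx.1]) (by linarith [hx.2])
  have hx_eq : sin x = cos a * sin (x - a) := by
    conv_lhs => rw [← add_sub_cancel a x]
    rw [sin_add, ha]
    ring
  rw [hx_eq]
  exact mul_ne_zero hcos hsin.ne'

lemma sin_ne_zero_of_mul_cos_eq_mul_sin {c x : ℝ} (hc : c ≠ 0) (h : c * cos x = x * sin x) :
    sin x ≠ 0 := by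
  intro hs
  rw [hs, mul_zero] at h
  rcases sin_eq_zero_iff_cos_eq.1 hs with hcos | hcos <;> simp [hcos, hc] at h

section RootInPeriod

variable {a c : ℝ}

lemma strictAntiOn_mul_cot_sub (hc : 0 ≤ c) (ha : sin a = 0) :
    StrictAntiOn (fun x => c * cot x - x) (Ioo a (a + π)) := by
  have hderiv : ∀ x ∈ Ioo a (a + π), HasDerivAt (fun x => c * cot x - x) (-c / sin x ^ 2 - 1) x :=
    fun x hx => by
      refine (((hasDerivAt_cot (sin_ne_zero_of_mem_Ioo_add_pi ha hx)).const_mul c).sub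
        (hasDerivAt_id' x)).congr_deriv ?_
      ring
  refine strictAntiOn_of_hasDerivWithinAt_neg (convex_Ioo _ _)
    (fun x hx => (hderiv x hx).continuousAt.continuousWithinAt)
    (fun x hx => (hderiv x (interior_subset hx)).hasDerivWithinAt) fun x _ => ?_
  have : 0 ≤ c / sin x ^ 2 := by positivity
  linarith [neg_div (sin x ^ 2) c]

lemma exists_mem_Ioo_mul_cos_sub_mul_sin_eq_zero (hc : c ≠ 0) (ha : sin a = 0) :
    ∃ x ∈ Ioo a (a + π), c * cos x - x * sin x = 0 := by
  have hcos : cos a ^ 2 = 1 := by rw [← cos_sq_add_sin_sq a, ha]; ring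
  refine exists_mem_Ioo_eq_zero_of_mul_neg (by linarith [pi_pos]) (by fun_prop) ?_
  rw [cos_add_pi, sin_add_pi, ha]
  nlinarith [sq_pos_of_ne_zero hc]

theorem existsUnique_mem_Ioo_mul_cos_sub_mul_sin_eq_zero (hc : 0 < c) (ha : sin a = 0) :
    ∃! x, x ∈ Ioo a (a + π) ∧ c * cos x - x * sin x = 0 := by
  have hcot_root : ∀ x ∈ Ioo a (a + π), c * cos x - x * sin x = 0 → c * cot x - x = 0 := by
    intro x hx hroot
    rw [cot_eq_cos_div_sin, mul_div_assoc', div_sub' (sin_ne_zero_of_mem_Ioo_add_pi ha hx),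
      mul_comm (sin x), hroot, zero_div]
  obtain ⟨x, hx, hroot⟩ := exists_mem_Ioo_mul_cos_sub_mul_sin_eq_zero hc.ne' ha
  refine ⟨x, ⟨hx, hroot⟩, fun y ⟨hy, hyroot⟩ => ?_⟩
  exact (strictAntiOn_mul_cot_sub hc.le ha).injOn hy hx
    ((hcot_root y hy hyroot).trans (hcot_root x hx hroot).symm)

end RootInPeriod

end Real

/-- For every integer `m ≥ 0`, the function `μ ↦ 2 cos μ − μ sin μ` has exactly one zero in
`(mπ, (m+1)π)`; consequently any sequence `μ k` of such roots (with `μ k ∈ ((k−1)π, kπ)`)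
is strictly increasing and no `μ k` is an integer multiple of `π`. -/
theorem dirichlet_char_unique_root :
    (∀ m : ℕ, ∃! μ : ℝ, μ ∈ Ioo ((m : ℝ) * π) (((m : ℝ) + 1) * π) ∧
      2 * Real.cos μ - μ * Real.sin μ = 0) ∧
    (∀ μ : ℕ → ℝ,
      (∀ k : ℕ, 1 ≤ k → μ k ∈ Ioo (((k : ℝ) - 1) * π) ((k : ℝ) * π) ∧
        2 * Real.cos (μ k) = μ k * Real.sin (μ k)) →
      StrictMonoOn μ (Set.Ici 1) ∧
      ∀ k : ℕ, 1 ≤ k → ∀ m : ℤ, μ k ≠ (m : ℝ) * π) := by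
  refine ⟨fun m => ?_, fun μ hμ => ⟨fun k hk l hl hkl => ?_, fun k hk m hkm => ?_⟩⟩
  · rw [add_one_mul]
    exact existsUnique_mem_Ioo_mul_cos_sub_mul_sin_eq_zero two_pos (sin_nat_mul_pi m)
  · have hkl' : (k : ℝ) ≤ l - 1 := by
      rw [le_sub_iff_add_le]
      exact_mod_cast hkl
    calc μ k < k * π := (hμ k hk).1.2
      _ ≤ (l - 1) * π := by gcongr
      _ < μ l := (hμ l hl).1.1
  · exact sin_ne_zero_of_mul_cos_eq_mul_sin two_ne_zero (hμ k hk).2 (hkm ▸ sin_int_mul_pi m)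
end

section
/- Let μ > 0 satisfy 2 cos μ = μ sin μ, and define U(x) = sin((1+x)μ) for x ∈ [−1,0] and V(x) = sin((1−x)μ) for x ∈ [0,1]. Then U''(x) = −μ² U(x) on (−1,0), V''(x) = −μ² V(x) on (0,1), U(−1) = 0, V(1) = 0, U(0) = V(0) = sin μ ≠ 0, and the point-mass interface condition V'(0) − U'(0) = −μ² sin μ holds. -/
open Real Set

lemma hasDerivAt_sin_mul_add (a b x : ℝ) :
    HasDerivAt (fun x => sin (a * x + b)) (a * cos (a * x + b)) x := by
  simpa [mul_comm] using ((hasDerivAt_id x).const_mul a |>.add_const b).sin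

lemma hasDerivAt_cos_mul_add (a b x : ℝ) :
    HasDerivAt (fun x => cos (a * x + b)) (-a * sin (a * x + b)) x := by
  simpa [mul_comm] using ((hasDerivAt_id x).const_mul a |>.add_const b).cos

lemma deriv_sin_mul_add (a b : ℝ) :
    deriv (fun x => sin (a * x + b)) = fun x => a * cos (a * x + b) :=
  funext fun x => (hasDerivAt_sin_mul_add a b x).deriv

lemma deriv_deriv_sin_mul_add (a b : ℝ) :
    deriv (deriv fun x => sin (a * x + b)) = fun x => -a ^ 2 * sin (a * x + b) := by
  rw [deriv_sin_mul_add]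
  funext x
  rw [((hasDerivAt_cos_mul_add a b x).const_mul a).deriv]
  ring

lemma sin_ne_zero_of_two_mul_cos_eq {μ : ℝ} (hchar : 2 * cos μ = μ * sin μ) : sin μ ≠ 0 := by
  intro hsin
  have hcos : cos μ = 0 := by simpa [hsin] using hchar
  simpa [hsin, hcos] using sin_sq_add_cos_sq μ

theorem dirichlet_eigenfunction_properties_general (μ : ℝ)
    (hchar : 2 * Real.cos μ = μ * Real.sin μ) :
    let U : ℝ → ℝ := fun x => Real.sin ((1 + x) * μ)
    let V : ℝ → ℝ := fun x => Real.sin ((1 - x) * μ)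
    (∀ x ∈ Ioo (-1 : ℝ) 0, deriv (deriv U) x = -μ ^ 2 * U x) ∧
    (∀ x ∈ Ioo (0 : ℝ) 1, deriv (deriv V) x = -μ ^ 2 * V x) ∧
    U (-1) = 0 ∧ V 1 = 0 ∧
    U 0 = Real.sin μ ∧ V 0 = Real.sin μ ∧ Real.sin μ ≠ 0 ∧
    deriv V 0 - deriv U 0 = -μ ^ 2 * Real.sin μ := by
  intro U V
  have hU : U = fun x => sin (μ * x + μ) := by funext x; simp only [U]; ring_nf
  have hV : V = fun x => sin (-μ * x + μ) := by funext x; simp only [V]; ring_nf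
  refine ⟨fun x _ => ?_, fun x _ => ?_, by simp [U], by simp [V], by simp [U], by simp [V],
    sin_ne_zero_of_two_mul_cos_eq hchar, ?_⟩
  · rw [hU, deriv_deriv_sin_mul_add]
  · rw [hV, deriv_deriv_sin_mul_add, neg_sq]
  · rw [hU, hV, deriv_sin_mul_add, deriv_sin_mul_add]
    simp only [mul_zero, zero_add]
    linear_combination -μ * hchar

/-- If `μ > 0` satisfies the Dirichlet characteristic equation `2 cos μ = μ sin μ`, then
`U(x) = sin((1+x)μ)` and `V(x) = sin((1−x)μ)` solve the eigenvalue problem with eigenvalue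
`−μ²`, clamped ends, continuity at `0` with nonzero point-mass value `sin μ`, and the
point-mass interface condition `V'(0) − U'(0) = −μ² sin μ`. -/
theorem dirichlet_eigenfunction_properties (μ : ℝ) (hμ : 0 < μ)
    (hchar : 2 * Real.cos μ = μ * Real.sin μ) :
    let U : ℝ → ℝ := fun x => Real.sin ((1 + x) * μ)
    let V : ℝ → ℝ := fun x => Real.sin ((1 - x) * μ)
    (∀ x ∈ Ioo (-1 : ℝ) 0, deriv (deriv U) x = -μ ^ 2 * U x) ∧
    (∀ x ∈ Ioo (0 : ℝ) 1, deriv (deriv V) x = -μ ^ 2 * V x) ∧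
    U (-1) = 0 ∧ V 1 = 0 ∧
    U 0 = Real.sin μ ∧ V 0 = Real.sin μ ∧ Real.sin μ ≠ 0 ∧
    deriv V 0 - deriv U 0 = -μ ^ 2 * Real.sin μ :=
  dirichlet_eigenfunction_properties_general μ hchar
end

section
/- Let μ_k denote, for each integer k ≥ 1, the unique solution in ((k−1)π, kπ) of 2 cos μ = μ sin μ. Then for every integer k ≥ 2, the quantity ε_k = μ_k − (k−1)π satisfies arctan(2/(kπ)) < ε_k < arctan(2/((k−1)π)). -/
open Real Set

/-- For `k ≥ 2`, the root `μ_k ∈ ((k−1)π, kπ)` of `2 cos μ = μ sin μ` satisfies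
`arctan(2/(kπ)) < μ_k − (k−1)π < arctan(2/((k−1)π))`. -/
theorem dirichlet_root_arctan_bounds (μ : ℕ → ℝ)
    (hμ : ∀ k : ℕ, 1 ≤ k → μ k ∈ Ioo (((k : ℝ) - 1) * π) ((k : ℝ) * π) ∧
      2 * Real.cos (μ k) = μ k * Real.sin (μ k))
    (k : ℕ) (hk : 2 ≤ k) :
    Real.arctan (2 / ((k : ℝ) * π)) < μ k - ((k : ℝ) - 1) * π ∧
    μ k - ((k : ℝ) - 1) * π < Real.arctan (2 / (((k : ℝ) - 1) * π)) := by
  obtain ⟨⟨h1, h2⟩, heq⟩ := hμ k (by omega)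
  set n : ℕ := k - 1 with hn
  have hkn : ((k : ℝ) - 1) = (n : ℝ) := by
    have : (n : ℝ) = (k : ℝ) - 1 := by
      rw [hn]; push_cast [Nat.cast_sub (by omega : 1 ≤ k)]; ring
    linarith
  set ε : ℝ := μ k - ((k : ℝ) - 1) * π with hε
  have hε0 : 0 < ε := by simp [hε]; linarith
  have hεπ : ε < π := by
    have : (k : ℝ) * π = ((k : ℝ) - 1) * π + π := by ring
    simp [hε]; linarith [this ▸ h2]
  -- reduce the equation
  have hsin : Real.sin ε = (-1 : ℝ) ^ n * Real.sin (μ k) := by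
    rw [hε, hkn]; exact Real.sin_sub_nat_mul_pi (μ k) n
  have hcos : Real.cos ε = (-1 : ℝ) ^ n * Real.cos (μ k) := by
    rw [hε, hkn]; exact Real.cos_sub_nat_mul_pi (μ k) n
  have heq2 : 2 * Real.cos ε = μ k * Real.sin ε := by
    rw [hsin, hcos]
    calc 2 * ((-1:ℝ)^n * Real.cos (μ k)) = (-1:ℝ)^n * (2 * Real.cos (μ k)) := by ring
      _ = (-1:ℝ)^n * (μ k * Real.sin (μ k)) := by rw [heq]
      _ = μ k * ((-1:ℝ)^n * Real.sin (μ k)) := by ring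
  have hsinpos : 0 < Real.sin ε := Real.sin_pos_of_pos_of_lt_pi hε0 hεπ
  have hμpos : 0 < μ k := by
    have : (0:ℝ) ≤ ((k : ℝ) - 1) * π := by
      rw [hkn]; positivity
    linarith
  have hcospos : 0 < Real.cos ε := by nlinarith
  have hεhalf : ε < π / 2 := by
    by_contra h
    push_neg at h
    have := Real.cos_nonpos_of_pi_div_two_le_of_le h (by linarith [Real.pi_pos])
    linarith
  have htan : Real.tan ε = 2 / μ k := by
    rw [Real.tan_eq_sin_div_cos]
    field_simp
    nlinarith
  have harctan : Real.arctan (2 / μ k) = ε := by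
    rw [← htan, Real.arctan_tan (by linarith [Real.pi_pos]) hεhalf]
  have hπpos := Real.pi_pos
  have hμlt : μ k < (k : ℝ) * π := h2
  have hμgt : ((k : ℝ) - 1) * π < μ k := h1
  have hkm1pos : 0 < ((k : ℝ) - 1) * π := by
    rw [hkn]
    have : 0 < (n : ℝ) := by
      have : 1 ≤ n := by omega
      exact_mod_cast Nat.lt_of_lt_of_le Nat.zero_lt_one (by exact_mod_cast this)
    positivity
  constructor
  · rw [← harctan]
    exact Real.arctan_strictMono (by
      apply div_lt_div_of_pos_left (by norm_num) hμpos hμlt)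
  · rw [← harctan]
    exact Real.arctan_strictMono (by
      apply div_lt_div_of_pos_left (by norm_num) hkm1pos hμgt)
end

section
/- Let μ_k denote, for each integer k ≥ 1, the unique solution in ((k−1)π, kπ) of 2 cos μ = μ sin μ. Then there exists a constant C > 0 such that for all k ≥ 1, |μ_k − (k−1)π − 2/(kπ)| ≤ C/k². -/
open Real Set

/-!
Write `μ_k = (k - 1)π + δ` with `δ ∈ (0, π)`. Shifting by a multiple of `π` only changes the sign
of `cos` and `sin`, so `2 cos δ = μ_k sin δ`. Then `cos δ > 0`, and Jordan's inequality
`sin δ ≥ 2δ/π` gives `δ ≤ π/μ_k`. The Taylor bounds `δ - δ³/6 ≤ sin δ ≤ δ` and `cos δ ≥ 1 - δ²/2`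
pin `μ_k δ` to `2 + O(1/μ_k)`, i.e. `δ = 2/μ_k + O(1/μ_k²)`, and `2/μ_k = 2/(kπ) + O(1/k²)`.
-/

namespace Real

theorem two_cos_eq_mul_sin_of_add_nat_mul_pi {δ m : ℝ} (n : ℕ)
    (h : 2 * cos (δ + n * π) = m * sin (δ + n * π)) : 2 * cos δ = m * sin δ := by
  rw [cos_add_nat_mul_pi, sin_add_nat_mul_pi] at h
  exact mul_left_cancel₀ (pow_ne_zero n (by norm_num : (-1 : ℝ) ≠ 0)) (by linear_combination h)

section TwoCosEqMulSin

variable {δ m : ℝ} (hm : 0 < m) (hδ : δ ∈ Ioo 0 π) (h : 2 * cos δ = m * sin δ)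
include hm hδ h

theorem lt_pi_div_two_of_two_cos_eq_mul_sin : δ < π / 2 := by
  have hcos : 0 < cos δ := by nlinarith [mul_pos hm (sin_pos_of_mem_Ioo hδ)]
  by_contra! hle
  linarith [cos_nonpos_of_pi_div_two_le_of_le hle (by linarith [hδ.2])]

theorem le_pi_div_of_two_cos_eq_mul_sin : δ ≤ π / m := by
  have hjordan := mul_le_sin hδ.1.le (lt_pi_div_two_of_two_cos_eq_mul_sin hm hδ h).le
  have hmsin : m * sin δ ≤ 2 := by linarith [cos_le_one δ]
  rw [le_div_iff₀ hm]
  have := mul_le_mul_of_nonneg_left hjordan hm.le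
  field_simp at this
  nlinarith [pi_pos]

theorem abs_sub_two_div_le_of_two_cos_eq_mul_sin : |δ - 2 / m| ≤ π ^ 2 / (2 * m ^ 2) := by
  have hδ0 := hδ.1
  have hhalf := lt_pi_div_two_of_two_cos_eq_mul_sin hm hδ h
  have hmδ : m * δ ≤ π := by
    have := le_pi_div_of_two_cos_eq_mul_sin hm hδ h
    rwa [le_div_iff₀ hm, mul_comm] at this
  have hupper : m * δ - 2 ≤ m * δ ^ 3 / 6 := by
    nlinarith [sin_ge_sub_cube hδ.1.le, cos_le_one δ]
  have hlower : 2 - m * δ ≤ δ ^ 2 := by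
    nlinarith [sin_le hδ.1.le, one_sub_sq_div_two_le_cos (x := δ)]
  have hscaled : |m * δ - 2| * m ≤ π ^ 2 / 2 := by
    rcases abs_cases (m * δ - 2) with ⟨habs, -⟩ | ⟨habs, -⟩ <;> rw [habs]
    · have : (m * δ) ^ 2 * δ ≤ π ^ 2 * (π / 2) := by gcongr
      nlinarith [pi_lt_four]
    · have : m * δ * δ ≤ π * (π / 2) := by gcongr
      nlinarith
  have hsplit : δ - 2 / m = (m * δ - 2) / m := by field_simp
  rw [hsplit, abs_div, abs_of_pos hm, div_le_div_iff₀ hm (by positivity)]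
  nlinarith

end TwoCosEqMulSin

theorem abs_two_div_sub_two_div_nat_mul_pi_le {m : ℝ} {n : ℕ} (hn : 1 ≤ n)
    (hm : m ∈ Ioo (n * π) ((n + 1) * π)) : |2 / m - 2 / ((n + 1) * π)| ≤ 2 / (n + 1) ^ 2 := by
  have hn' : (1 : ℝ) ≤ n := by exact_mod_cast hn
  have hm0 : 0 < m := lt_of_le_of_lt (by positivity) hm.1
  have hsplit : 2 / m - 2 / ((n + 1) * π) = 2 * ((n + 1) * π - m) / (m * ((n + 1) * π)) := by
    field_simp
  rw [hsplit, abs_of_nonneg (div_nonneg (by nlinarith [hm.2]) (by positivity)),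
    div_le_div_iff₀ (by positivity) (by positivity)]
  have hhalf : (n + 1) * π ≤ 2 * m := by nlinarith [hm.1, pi_pos]
  have hgap : (n + 1) * π - m ≤ π := by linarith [hm.1]
  nlinarith [mul_le_mul_of_nonneg_right hhalf (by positivity : (0 : ℝ) ≤ (n + 1) * π),
    mul_le_mul_of_nonneg_right hgap (by positivity : (0 : ℝ) ≤ (n + 1) ^ 2), pi_gt_three]

theorem abs_sub_nat_mul_pi_sub_two_div_le {m : ℝ} {n : ℕ} (hn : 1 ≤ n)
    (hm : m ∈ Ioo (n * π) ((n + 1) * π)) (h : 2 * cos m = m * sin m) :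
    |m - n * π - 2 / ((n + 1) * π)| ≤ 4 / (n + 1) ^ 2 := by
  have hn' : (1 : ℝ) ≤ n := by exact_mod_cast hn
  have hm0 : 0 < m := lt_of_le_of_lt (by positivity) hm.1
  have hδ : m - n * π ∈ Ioo 0 π := ⟨by linarith [hm.1], by linarith [hm.2]⟩
  have hreduced : 2 * cos (m - n * π) = m * sin (m - n * π) :=
    two_cos_eq_mul_sin_of_add_nat_mul_pi n (by rwa [sub_add_cancel])
  have hdev := abs_sub_two_div_le_of_two_cos_eq_mul_sin hm0 hδ hreduced
  have hhalf : (n + 1) * π ≤ 2 * m := by nlinarith [hm.1, pi_pos]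
  have hdev' : π ^ 2 / (2 * m ^ 2) ≤ 2 / (n + 1) ^ 2 := by
    rw [div_le_div_iff₀ (by positivity) (by positivity)]
    nlinarith [mul_self_le_mul_self (by positivity) hhalf]
  calc |m - n * π - 2 / ((n + 1) * π)|
      = |(m - n * π - 2 / m) + (2 / m - 2 / ((n + 1) * π))| := by ring_nf
    _ ≤ |m - n * π - 2 / m| + |2 / m - 2 / ((n + 1) * π)| := abs_add_le _ _
    _ ≤ 2 / (n + 1) ^ 2 + 2 / (n + 1) ^ 2 := by
      gcongr
      · exact hdev.trans hdev'
      · exact abs_two_div_sub_two_div_nat_mul_pi_le hn hm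
    _ = 4 / (n + 1) ^ 2 := by ring

end Real

/-- Asymptotics of the Dirichlet roots: `μ_k = (k−1)π + 2/(kπ) + O(1/k²)`. -/
theorem dirichlet_root_asymptotics (μ : ℕ → ℝ)
    (hμ : ∀ k : ℕ, 1 ≤ k → μ k ∈ Ioo (((k : ℝ) - 1) * π) ((k : ℝ) * π) ∧
      2 * Real.cos (μ k) = μ k * Real.sin (μ k)) :
    ∃ C > 0, ∀ k : ℕ, 1 ≤ k →
      |μ k - ((k : ℝ) - 1) * π - 2 / ((k : ℝ) * π)| ≤ C / (k : ℝ) ^ 2 := by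
  refine ⟨4, by norm_num, fun k hk => ?_⟩
  obtain ⟨n, rfl⟩ := Nat.exists_eq_add_of_le' hk
  obtain ⟨hmem, heq⟩ := hμ (n + 1) hk
  push_cast at hmem ⊢
  simp only [add_sub_cancel_right] at hmem ⊢
  rcases Nat.eq_zero_or_pos n with rfl | hn
  · norm_num at hmem ⊢
    have h2π : 2 / π < π := by rw [div_lt_iff₀ pi_pos]; nlinarith [pi_gt_three]
    rw [abs_le]
    constructor <;> linarith [hmem.1, hmem.2, pi_lt_four, div_pos two_pos pi_pos]
  · exact abs_sub_nat_mul_pi_sub_two_div_le hn hmem heq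
end

section
/- Let μ_k denote, for each integer k ≥ 1, the unique solution in ((k−1)π, kπ) of 2 cos μ = μ sin μ, and set λ_{2k} = −(kπ)², λ_{2k−1} = −μ_k². Then the sequence (λ_n)_{n≥1} is strictly decreasing, and there exists a constant C > 0 such that for all k ≥ 1, |(μ_{k+1}² − (kπ)²) − 4| ≤ C/k; in particular there is a constant ρ > 0 with λ_n − λ_{n+1} ≥ ρ for all n ≥ 1. -/
open Real Set

lemma dirichlet_aux (k : ℕ) (μ : ℝ) (hlo : (k : ℝ) * π < μ) (hhi : μ < ((k : ℝ) + 1) * π)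
    (heq : 2 * Real.cos μ = μ * Real.sin μ) :
    0 < μ - k * π ∧ (μ - k * π) * μ < 2 ∧ 2 - (μ - k * π) ^ 2 ≤ (μ - k * π) * μ := by
  set t : ℝ := μ - k * π with ht
  have hμeq : μ = t + k * π := by ring
  have ht0 : 0 < t := by simp [ht]; linarith
  have htπ : t < π := by nlinarith
  have hμ0 : 0 < μ := by
    have : (0:ℝ) ≤ (k:ℝ) * π := by positivity
    linarith
  have hcos : Real.cos μ = (-1 : ℝ) ^ k * Real.cos t := by
    rw [hμeq]; exact Real.cos_add_nat_mul_pi t k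
  have hsin : Real.sin μ = (-1 : ℝ) ^ k * Real.sin t := by
    rw [hμeq]; exact Real.sin_add_nat_mul_pi t k
  have hpow : ((-1 : ℝ) ^ k) ≠ 0 := by positivity
  have heq' : 2 * Real.cos t = μ * Real.sin t := by
    have := heq
    rw [hcos, hsin] at this
    have h2 : (-1 : ℝ) ^ k * (2 * Real.cos t) = (-1 : ℝ) ^ k * (μ * Real.sin t) := by
      ring_nf; ring_nf at this; linarith
    exact mul_left_cancel₀ hpow h2
  have hsint : 0 < Real.sin t := Real.sin_pos_of_pos_of_lt_pi ht0 htπ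
  have hcost : 0 < Real.cos t := by nlinarith
  have htlt : t < π / 2 := by
    by_contra h
    push_neg at h
    have := Real.cos_nonpos_of_pi_div_two_le_of_le h (by linarith [Real.pi_pos])
    linarith
  have htan : t < Real.tan t := Real.lt_tan ht0 htlt
  rw [Real.tan_eq_sin_div_cos] at htan
  have h1 : t * Real.cos t < Real.sin t := by
    rw [lt_div_iff₀ hcost] at htan; linarith
  have htμ : t * μ < 2 := by
    have h2 : t * (2 * Real.cos t) < 2 * Real.sin t := by linarith [mul_pos ht0 hcost]
    rw [heq'] at h2
    have := mul_pos ht0 hμ0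
    nlinarith
  have hsinle : Real.sin t ≤ t := Real.sin_le ht0.le
  have hcoslb : 1 - t ^ 2 / 2 ≤ Real.cos t := Real.one_sub_sq_div_two_le_cos
  have hlow : 2 - t ^ 2 ≤ t * μ := by
    have : μ * Real.sin t ≤ μ * t := by nlinarith
    nlinarith
  exact ⟨ht0, htμ, hlow⟩

/-- The Dirichlet eigenvalue sequence `λ_{2k} = −(kπ)²`, `λ_{2k−1} = −μ_k²` is strictly
decreasing, `μ_{k+1}² − (kπ)² = 4 + O(1/k)`, and consecutive eigenvalues have a uniform gap. -/
theorem dirichlet_eigenvalue_gap (μ lam : ℕ → ℝ)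
    (hμ : ∀ k : ℕ, 1 ≤ k → μ k ∈ Ioo (((k : ℝ) - 1) * π) ((k : ℝ) * π) ∧
      2 * Real.cos (μ k) = μ k * Real.sin (μ k))
    (hlam : ∀ k : ℕ, 1 ≤ k →
      lam (2 * k) = -(((k : ℝ)) * π) ^ 2 ∧ lam (2 * k - 1) = -(μ k) ^ 2) :
    StrictAntiOn lam (Set.Ici 1) ∧
    (∃ C > 0, ∀ k : ℕ, 1 ≤ k →
      |((μ (k + 1)) ^ 2 - ((k : ℝ) * π) ^ 2) - 4| ≤ C / (k : ℝ)) ∧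
    (∃ ρ > 0, ∀ n : ℕ, 1 ≤ n → lam n - lam (n + 1) ≥ ρ) := by
  have hπ3 : (3 : ℝ) < π := Real.pi_gt_three
  -- basic interval facts, with the cast cleaned up
  have hlo : ∀ k : ℕ, ((k : ℝ)) * π < μ (k + 1) := by
    intro k
    have := (hμ (k + 1) (by omega)).1.1
    push_cast at this
    linarith
  have hhi : ∀ k : ℕ, μ (k + 1) < ((k : ℝ) + 1) * π := by
    intro k
    have := (hμ (k + 1) (by omega)).1.2
    push_cast at this
    linarith
  have key : ∀ k : ℕ,
      0 < μ (k + 1) - (k : ℝ) * π ∧ (μ (k + 1) - (k : ℝ) * π) * μ (k + 1) < 2 ∧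
        2 - (μ (k + 1) - (k : ℝ) * π) ^ 2 ≤ (μ (k + 1) - (k : ℝ) * π) * μ (k + 1) := by
    intro k
    exact dirichlet_aux k (μ (k + 1)) (hlo k) (hhi k) (hμ (k + 1) (by omega)).2
  -- uniform gap of size 2 between consecutive eigenvalues
  have step : ∀ n : ℕ, 1 ≤ n → lam n - lam (n + 1) ≥ 2 := by
    intro n hn
    rcases Nat.even_or_odd n with ⟨k, hk⟩ | ⟨k, hk⟩
    · -- n = 2k, k ≥ 1 : gap = μ_{k+1}² − (kπ)²
      have hk1 : 1 ≤ k := by omega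
      have h1 : lam n = -(((k : ℝ)) * π) ^ 2 := by
        have := (hlam k hk1).1; rw [show n = 2 * k by omega]; exact this
      have h2 : lam (n + 1) = -(μ (k + 1)) ^ 2 := by
        have := (hlam (k + 1) (by omega)).2
        rw [show n + 1 = 2 * (k + 1) - 1 by omega]; exact this
      obtain ⟨ht0, htμ, hlow⟩ := key k
      set t := μ (k + 1) - (k : ℝ) * π with htdef
      have hμk : (k : ℝ) * π < μ (k + 1) := hlo k
      have hk3 : (3 : ℝ) ≤ (k : ℝ) * π := by
        have : (1 : ℝ) ≤ (k : ℝ) := by exact_mod_cast hk1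
        nlinarith
    -- μ > 3, so t < 2/3
      have hμ3 : (3 : ℝ) < μ (k + 1) := by linarith
      have ht23 : t < 2 / 3 := by nlinarith
      rw [h1, h2]
      nlinarith [sq_nonneg t]
    · -- n = 2k+1 : gap = ((k+1)π)² − μ_{k+1}²
      have h1 : lam n = -(μ (k + 1)) ^ 2 := by
        have := (hlam (k + 1) (by omega)).2
        rw [show n = 2 * (k + 1) - 1 by omega]; exact this
      have h2 : lam (n + 1) = -(((k : ℝ) + 1) * π) ^ 2 := by
        have := (hlam (k + 1) (by omega)).1
        rw [show n + 1 = 2 * (k + 1) by omega]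
        push_cast at this ⊢; linarith
      obtain ⟨ht0, htμ, hlow⟩ := key k
      set t := μ (k + 1) - (k : ℝ) * π with htdef
      have hμk : (k : ℝ) * π < μ (k + 1) := hlo k
      have hk0 : (0 : ℝ) ≤ (k : ℝ) * π := by positivity
      have htμ' : t ≤ μ (k + 1) := by linarith
      have ht2 : t ^ 2 < 2 := by nlinarith
      have ht32 : t < 3 / 2 := by nlinarith
      rw [h1, h2]
      nlinarith
  -- consecutive strict decrease
  have step' : ∀ n : ℕ, 1 ≤ n → lam (n + 1) < lam n := by
    intro n hn; have := step n hn; linarith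
  have hanti : StrictAntiOn lam (Set.Ici 1) := by
    have H : ∀ a : ℕ, 1 ≤ a → ∀ d : ℕ, lam (a + d + 1) < lam a := by
      intro a ha d
      induction d with
      | zero => simpa using step' a ha
      | succ d ih =>
        have h1 : lam (a + (d + 1) + 1) < lam (a + d + 1) := step' (a + d + 1) (by omega)
        linarith
    intro m hm n hn hmn
    have hm1 : 1 ≤ m := hm
    have : lam (m + (n - m - 1) + 1) < lam m := H m hm1 (n - m - 1)
    rwa [show m + (n - m - 1) + 1 = n by omega] at this
  refine ⟨hanti, ⟨2, by norm_num, ?_⟩, ⟨2, by norm_num, step⟩⟩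
  intro k hk1
  obtain ⟨ht0, htμ, hlow⟩ := key k
  set t := μ (k + 1) - (k : ℝ) * π with htdef
  have hμk : (k : ℝ) * π < μ (k + 1) := hlo k
  have hk1' : (1 : ℝ) ≤ (k : ℝ) := by exact_mod_cast hk1
  have hk0 : (0 : ℝ) < (k : ℝ) := by linarith
  have h3k : 3 * (k : ℝ) < μ (k + 1) := by nlinarith
  have ht3k : t * (3 * (k : ℝ)) < 2 := by nlinarith
  have ht1 : t < 1 := by nlinarith
  have hX : (μ (k + 1)) ^ 2 - ((k : ℝ) * π) ^ 2 = 2 * (t * μ (k + 1)) - t ^ 2 := by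
    rw [htdef]; ring
  rw [abs_le]
  constructor
  · rw [neg_le, neg_sub, le_div_iff₀ hk0]
    -- (4 - X) * k ≤ 2, using 4 - X ≤ 3 t² and 3 k t² < 2
    rw [hX]
    nlinarith [mul_pos ht0 hk0]
  · have h1 : (μ (k + 1)) ^ 2 - ((k : ℝ) * π) ^ 2 - 4 ≤ 0 := by rw [hX]; nlinarith [sq_nonneg t]
    have h2 : (0 : ℝ) ≤ 2 / (k : ℝ) := by positivity
    linarith
end

section
/- Let μ_k denote, for each integer k ≥ 1, the unique solution in ((k−1)π, kπ) of 2 cos μ = μ sin μ. Then there exists C > 0 such that for all k ≥ 1, | ∫_{−1}^{0} sin²((1+x)μ_k) dx + ∫_{0}^{1} sin²((1−x)μ_k) dx + sin²(μ_k) − 1 | ≤ C/k². Moreover, for every integer k ≥ 1, ∫_{−1}^{0} sin²(kπx) dx + ∫_{0}^{1} sin²(kπx) dx = 1. -/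
open Real Set

/-!
Both integrals in `‖φ_{2k−1}‖²` are, after an affine change of variables,
`∫₀¹ sin²(μx) dx = 1/2 − sin μ cos μ / (2μ)`. The characteristic equation turns `sin μ cos μ / μ` into `sin² μ / 2`,
so `‖φ_{2k−1}‖² − 1 = sin² μ / 2`; combined with `sin²+cos² = 1` it also gives
`sin² μ = 4 / (4 + μ²)`, which is `O(1/k²)` because `μ_k > (k−1)π`.
For `φ_{2k}` the same integral formula applies with `sin(kπ) = 0`.
-/

section IntegralSinSq

variable {c : ℝ}

lemma integral_sin_sq_mul_zero_one (hc : c ≠ 0) :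
    ∫ x in (0 : ℝ)..1, sin (c * x) ^ 2 = 1 / 2 - sin c * cos c / (2 * c) := by
  rw [intervalIntegral.integral_comp_mul_left (fun y => sin y ^ 2) hc, integral_sin_sq]
  simp only [mul_zero, mul_one, sin_zero, cos_zero, smul_eq_mul]
  field_simp
  ring

lemma integral_sin_sq_mul_neg_one_zero (hc : c ≠ 0) :
    ∫ x in (-1 : ℝ)..0, sin (c * x) ^ 2 = 1 / 2 - sin c * cos c / (2 * c) := by
  rw [← integral_sin_sq_mul_zero_one hc]
  have h := intervalIntegral.integral_comp_neg (a := -1) (b := 0) (fun x => sin (c * x) ^ 2)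
  simpa only [mul_neg, sin_neg, neg_sq, neg_neg, neg_zero] using h

lemma integral_sin_sq_one_add_mul (hc : c ≠ 0) :
    ∫ x in (-1 : ℝ)..0, sin ((1 + x) * c) ^ 2 = 1 / 2 - sin c * cos c / (2 * c) := by
  rw [← integral_sin_sq_mul_zero_one hc]
  simpa [mul_comm c] using
    intervalIntegral.integral_comp_add_left (a := -1) (b := 0) (fun x => sin (c * x) ^ 2) 1

lemma integral_sin_sq_one_sub_mul (hc : c ≠ 0) :
    ∫ x in (0 : ℝ)..1, sin ((1 - x) * c) ^ 2 = 1 / 2 - sin c * cos c / (2 * c) := by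
  rw [← integral_sin_sq_mul_zero_one hc]
  simpa [mul_comm c] using
    intervalIntegral.integral_comp_sub_left (a := 0) (b := 1) (fun x => sin (c * x) ^ 2) 1

end IntegralSinSq

section CharacteristicRoot

variable {μ : ℝ}

lemma sin_sq_eq_of_two_cos_eq (h : 2 * cos μ = μ * sin μ) : sin μ ^ 2 = 4 / (4 + μ ^ 2) := by
  rw [eq_div_iff (by positivity)]
  linear_combination (-(2 * cos μ + μ * sin μ)) * h + 4 * sin_sq_add_cos_sq μ

lemma odd_eigenvector_norm_sq_sub_one (hμ0 : μ ≠ 0) (h : 2 * cos μ = μ * sin μ) :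
    (∫ x in (-1 : ℝ)..0, sin ((1 + x) * μ) ^ 2) + (∫ x in (0 : ℝ)..1, sin ((1 - x) * μ) ^ 2) +
      sin μ ^ 2 - 1 = 2 / (4 + μ ^ 2) := by
  have hcos : cos μ = μ * sin μ / 2 := by linarith
  rw [integral_sin_sq_one_add_mul hμ0, integral_sin_sq_one_sub_mul hμ0,
    show 2 / (4 + μ ^ 2) = sin μ ^ 2 / 2 by rw [sin_sq_eq_of_two_cos_eq h]; ring, hcos]
  field_simp
  ring

lemma two_div_four_add_sq_le {k : ℝ} (hk : 1 ≤ k) (hμ : (k - 1) * π ≤ μ) :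
    2 / (4 + μ ^ 2) ≤ 4 / k ^ 2 := by
  have hkμ : k - 1 ≤ μ :=
    (le_mul_of_one_le_right (by linarith) (by linarith [pi_gt_three])).trans hμ
  rw [div_le_div_iff₀ (by positivity) (by positivity)]
  nlinarith [sq_nonneg (μ - 1)]

end CharacteristicRoot

/-- The eigenvectors of the Dirichlet system are asymptotically normalized:
`‖φ_{2k−1}‖² = 1 + O(1/k²)` and `‖φ_{2k}‖² = 1` exactly. -/
theorem dirichlet_eigenvectors_asymptotically_normalized (μ : ℕ → ℝ)
    (hμ : ∀ k : ℕ, 1 ≤ k → μ k ∈ Ioo (((k : ℝ) - 1) * π) ((k : ℝ) * π) ∧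
      2 * Real.cos (μ k) = μ k * Real.sin (μ k)) :
    (∃ C > 0, ∀ k : ℕ, 1 ≤ k →
      |(∫ x in (-1 : ℝ)..0, Real.sin ((1 + x) * μ k) ^ 2) +
       (∫ x in (0 : ℝ)..1, Real.sin ((1 - x) * μ k) ^ 2) +
       Real.sin (μ k) ^ 2 - 1| ≤ C / (k : ℝ) ^ 2) ∧
    (∀ k : ℕ, 1 ≤ k →
      (∫ x in (-1 : ℝ)..0, Real.sin ((k : ℝ) * π * x) ^ 2) +
      (∫ x in (0 : ℝ)..1, Real.sin ((k : ℝ) * π * x) ^ 2) = 1) := by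
  refine ⟨⟨4, by norm_num, fun k hk => ?_⟩, fun k hk => ?_⟩
  · obtain ⟨⟨hlow, -⟩, hchar⟩ := hμ k hk
    have hμ0 : μ k ≠ 0 := by
      have : 0 ≤ ((k : ℝ) - 1) * π := mul_nonneg (by simpa using hk) pi_pos.le
      linarith
    rw [odd_eigenvector_norm_sq_sub_one hμ0 hchar, abs_of_pos (by positivity)]
    exact two_div_four_add_sq_le (by exact_mod_cast hk) hlow.le
  · have hc : (k : ℝ) * π ≠ 0 := mul_ne_zero (by positivity) pi_ne_zero
    rw [integral_sin_sq_mul_neg_one_zero hc, integral_sin_sq_mul_zero_one hc, sin_nat_mul_pi]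
    ring
end

section
/- Let μ and ν be two distinct positive real numbers each satisfying 2 cos μ = μ sin μ and 2 cos ν = ν sin ν. Then ∫_{−1}^{0} sin((1+x)μ) sin((1+x)ν) dx + ∫_{0}^{1} sin((1−x)μ) sin((1−x)ν) dx + sin(μ) sin(ν) = 0. -/
/-!
Both eigenvectors are built from `u(x) = sin (x μ)` and `v(x) = sin (x ν)` on `[0, 1]`, which solve
`u'' = -μ² u`, `v'' = -ν² v` and vanish at `0`. Green's identity gives
`(ν² - μ²) ∫₀¹ u v = u'(1) v(1) - u(1) v'(1) = μ cos μ sin ν - ν sin μ cos ν`, and the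
characteristic equation turns the right-hand side into `(μ² - ν²) sin μ sin ν / 2`.
Both intervals of the eigenvector reduce to `[0, 1]`, so the inner product is
`2 ∫₀¹ u v + sin μ sin ν = 0`.
-/

open Real Set

theorem hasDerivAt_wronskian_sin_mul (μ ν x : ℝ) :
    HasDerivAt (fun t => μ * cos (t * μ) * sin (t * ν) - ν * sin (t * μ) * cos (t * ν))
      ((ν ^ 2 - μ ^ 2) * (sin (x * μ) * sin (x * ν))) x := by
  have hsμ := (hasDerivAt_mul_const μ).sin (x := x)
  have hcμ := (hasDerivAt_mul_const μ).cos (x := x)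
  have hsν := (hasDerivAt_mul_const ν).sin (x := x)
  have hcν := (hasDerivAt_mul_const ν).cos (x := x)
  exact (((hcμ.const_mul μ).mul hsν).sub ((hsμ.const_mul ν).mul hcν)).congr_deriv (by ring)

theorem mul_integral_sin_mul_sin_mul (μ ν b : ℝ) :
    (ν ^ 2 - μ ^ 2) * ∫ x in (0 : ℝ)..b, sin (x * μ) * sin (x * ν) =
      μ * cos (b * μ) * sin (b * ν) - ν * sin (b * μ) * cos (b * ν) := by
  rw [← intervalIntegral.integral_const_mul,
    intervalIntegral.integral_eq_sub_of_hasDerivAt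
      (fun x _ => hasDerivAt_wronskian_sin_mul μ ν x)
      (by apply Continuous.intervalIntegrable; fun_prop)]
  simp

theorem integral_sin_mul_sin_mul_of_two_cos_eq (μ ν : ℝ) (hsq : μ ^ 2 ≠ ν ^ 2)
    (hcμ : 2 * cos μ = μ * sin μ) (hcν : 2 * cos ν = ν * sin ν) :
    ∫ x in (0 : ℝ)..1, sin (x * μ) * sin (x * ν) = -(sin μ * sin ν) / 2 := by
  have h := mul_integral_sin_mul_sin_mul μ ν 1
  simp only [one_mul] at h
  have hsub : ν ^ 2 - μ ^ 2 ≠ 0 := sub_ne_zero.mpr hsq.symm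
  rw [eq_div_iff two_ne_zero, ← mul_right_inj' hsub]
  linear_combination 2 * h + μ * sin ν * hcμ - ν * sin μ * hcν

/-- Orthogonality in `H = L²(−1,0) × L²(0,1) × ℝ` of Dirichlet eigenvectors associated with
distinct roots of the characteristic equation `2 cos μ = μ sin μ`. -/
theorem dirichlet_eigenvectors_orthogonal (μ ν : ℝ) (hμ : 0 < μ) (hν : 0 < ν) (hne : μ ≠ ν)
    (hcμ : 2 * Real.cos μ = μ * Real.sin μ) (hcν : 2 * Real.cos ν = ν * Real.sin ν) :
    (∫ x in (-1 : ℝ)..0, Real.sin ((1 + x) * μ) * Real.sin ((1 + x) * ν)) +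
    (∫ x in (0 : ℝ)..1, Real.sin ((1 - x) * μ) * Real.sin ((1 - x) * ν)) +
    Real.sin μ * Real.sin ν = 0 := by
  have hsq : μ ^ 2 ≠ ν ^ 2 := fun h => hne ((pow_left_inj₀ hμ.le hν.le two_ne_zero).mp h)
  have hleft := intervalIntegral.integral_comp_add_left
    (fun x => sin (x * μ) * sin (x * ν)) (a := -1) (b := 0) 1
  have hright := intervalIntegral.integral_comp_sub_left
    (fun x => sin (x * μ) * sin (x * ν)) (a := 0) (b := 1) 1
  norm_num at hleft hright
  rw [hleft, hright, integral_sin_mul_sin_mul_of_two_cos_eq μ ν hsq hcμ hcν]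
  ring
end

section
/- Let μ > 0 satisfy μ sin(2μ) = 2 cos(2μ). Then cos μ ≠ 0 and sin μ ≠ 0, and the functions U(x) = sin(μ(x+1)) on [−1,0] and V(x) = tan(μ) cos(μ(x−1)) on [0,1] satisfy U''(x) = −μ² U(x) on (−1,0), V''(x) = −μ² V(x) on (0,1), U(−1) = 0, V'(1) = 0, U(0) = V(0) = sin μ, and the point-mass interface condition V'(0) − U'(0) = −μ² sin μ. -/
open Real Set

private lemma dU (μ x : ℝ) :
    deriv (fun x => Real.sin (μ * (x + 1))) x = μ * Real.cos (μ * (x + 1)) := by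
  have h : HasDerivAt (fun x => Real.sin (μ * (x + 1)))
      (Real.cos (μ * (x + 1)) * (μ * 1)) x :=
    (Real.hasDerivAt_sin _).comp x (((hasDerivAt_id x).add_const 1).const_mul μ)
  rw [h.deriv]; ring

private lemma ddU (μ x : ℝ) :
    deriv (deriv (fun x => Real.sin (μ * (x + 1)))) x
      = -μ ^ 2 * Real.sin (μ * (x + 1)) := by
  have h1 : deriv (fun x => Real.sin (μ * (x + 1)))
      = fun x => μ * Real.cos (μ * (x + 1)) := funext fun x => dU μ x
  rw [h1]
  have h : HasDerivAt (fun x => μ * Real.cos (μ * (x + 1)))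
      (μ * (-Real.sin (μ * (x + 1)) * (μ * 1))) x :=
    ((Real.hasDerivAt_cos _).comp x (((hasDerivAt_id x).add_const 1).const_mul μ)).const_mul μ
  rw [h.deriv]; ring

private lemma dV (c μ x : ℝ) :
    deriv (fun x => c * Real.cos (μ * (x - 1))) x = -(c * μ) * Real.sin (μ * (x - 1)) := by
  have h : HasDerivAt (fun x => c * Real.cos (μ * (x - 1)))
      (c * (-Real.sin (μ * (x - 1)) * (μ * 1))) x :=
    ((Real.hasDerivAt_cos _).comp x (((hasDerivAt_id x).sub_const 1).const_mul μ)).const_mul c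
  rw [h.deriv]; ring

private lemma ddV (c μ x : ℝ) :
    deriv (deriv (fun x => c * Real.cos (μ * (x - 1)))) x
      = -μ ^ 2 * (c * Real.cos (μ * (x - 1))) := by
  have h1 : deriv (fun x => c * Real.cos (μ * (x - 1)))
      = fun x => -(c * μ) * Real.sin (μ * (x - 1)) := funext fun x => dV c μ x
  rw [h1]
  have h : HasDerivAt (fun x => -(c * μ) * Real.sin (μ * (x - 1)))
      (-(c * μ) * (Real.cos (μ * (x - 1)) * (μ * 1))) x :=
    ((Real.hasDerivAt_sin _).comp x (((hasDerivAt_id x).sub_const 1).const_mul μ)).const_mul _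
  rw [h.deriv]; ring

/-- If `μ > 0` satisfies the Neumann characteristic equation `μ sin(2μ) = 2 cos(2μ)`, then
`cos μ ≠ 0`, `sin μ ≠ 0`, and `U(x) = sin(μ(x+1))`, `V(x) = tan μ · cos(μ(x−1))` solve the
eigenvalue problem with eigenvalue `−μ²`, boundary conditions `U(−1) = 0`, `V'(1) = 0`,
continuity `U(0) = V(0) = sin μ`, and interface condition `V'(0) − U'(0) = −μ² sin μ`. -/
theorem neumann_eigenfunction_properties (μ : ℝ) (hμ : 0 < μ)
    (hchar : μ * Real.sin (2 * μ) = 2 * Real.cos (2 * μ)) :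
    let U : ℝ → ℝ := fun x => Real.sin (μ * (x + 1))
    let V : ℝ → ℝ := fun x => Real.tan μ * Real.cos (μ * (x - 1))
    Real.cos μ ≠ 0 ∧ Real.sin μ ≠ 0 ∧
    (∀ x ∈ Ioo (-1 : ℝ) 0, deriv (deriv U) x = -μ ^ 2 * U x) ∧
    (∀ x ∈ Ioo (0 : ℝ) 1, deriv (deriv V) x = -μ ^ 2 * V x) ∧
    U (-1) = 0 ∧ deriv V 1 = 0 ∧
    U 0 = Real.sin μ ∧ V 0 = Real.sin μ ∧
    deriv V 0 - deriv U 0 = -μ ^ 2 * Real.sin μ := by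
  intro U V
  have hs2 : Real.sin (2 * μ) = 2 * Real.sin μ * Real.cos μ := Real.sin_two_mul μ
  have hc2 : Real.cos (2 * μ) = Real.cos μ ^ 2 - Real.sin μ ^ 2 := by
    rw [Real.cos_two_mul]; nlinarith [Real.sin_sq_add_cos_sq μ]
  have hcos : Real.cos μ ≠ 0 := by
    intro h
    have hs : Real.sin μ ^ 2 = 1 := by nlinarith [Real.sin_sq_add_cos_sq μ]
    rw [hs2, hc2, h] at hchar; nlinarith
  have hsin : Real.sin μ ≠ 0 := by
    intro h
    have hc : Real.cos μ ^ 2 = 1 := by nlinarith [Real.sin_sq_add_cos_sq μ]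
    rw [hs2, hc2, h] at hchar; nlinarith
  -- key: μ sin μ cos μ = cos 2μ
  have hkey : μ * (Real.sin μ * Real.cos μ) = Real.cos μ ^ 2 - Real.sin μ ^ 2 := by
    rw [hs2, hc2] at hchar; nlinarith
  refine ⟨hcos, hsin, fun x _ => ddU μ x, fun x _ => ddV _ μ x, by simp [U],
    ?_, by simp [U], ?_, ?_⟩
  · rw [show V = fun x => Real.tan μ * Real.cos (μ * (x - 1)) from rfl, dV]; simp
  · show Real.tan μ * Real.cos (μ * (0 - 1)) = Real.sin μ
    rw [show μ * ((0:ℝ) - 1) = -μ by ring, Real.cos_neg, Real.tan_mul_cos hcos]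
  · rw [show V = fun x => Real.tan μ * Real.cos (μ * (x - 1)) from rfl, dV,
      show U = fun x => Real.sin (μ * (x + 1)) from rfl, dU]
    rw [Real.tan_eq_sin_div_cos]
    rw [show μ * ((0:ℝ) - 1) = -μ by ring, show μ * ((0:ℝ) + 1) = μ by ring,
      Real.sin_neg]
    field_simp
    nlinarith [hkey]
end

section
/- Let ν_k denote, for each integer k ≥ 1, the unique solution in ((k−1)π/2, kπ/2) of μ sin(2μ) = 2 cos(2μ), and set λ_n = −ν_n². Then the sequence (λ_n)_{n≥1} is strictly decreasing and there exists a constant C > 0 such that for all n ≥ 1, ν_{n+1}² − ν_n² ≥ nπ²/2 − C. -/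
open Real Set

lemma neumann_aux (a : ℝ) (m : ℕ) (h1 : (m : ℝ) * π / 2 < a)
    (h2 : a < ((m : ℝ) + 1) * π / 2)
    (heq : a * Real.sin (2 * a) = 2 * Real.cos (2 * a)) :
    a ^ 2 < ((m : ℝ) * π / 2) ^ 2 + 2 + π ^ 2 / 16 := by
  have hπ := Real.pi_pos
  set x : ℝ := 2 * a - m * π with hxdef
  have hx0 : 0 < x := by simp only [hxdef]; linarith
  have hxπ : x < π := by simp only [hxdef]; nlinarith
  have h2a : 2 * a = x + (m : ℕ) * π := by push_cast; ring
  have hsin : Real.sin (2 * a) = (-1) ^ m * Real.sin x := by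
    rw [h2a, Real.sin_add_nat_mul_pi]
  have hcos : Real.cos (2 * a) = (-1) ^ m * Real.cos x := by
    rw [h2a, Real.cos_add_nat_mul_pi]
  have hne : ((-1 : ℝ)) ^ m ≠ 0 := by
    simp [pow_ne_zero]
  have heq2 : a * Real.sin x = 2 * Real.cos x := by
    rw [hsin, hcos] at heq
    have h' : (-1 : ℝ) ^ m * (a * Real.sin x) = (-1 : ℝ) ^ m * (2 * Real.cos x) := by
      linarith [heq]
    exact mul_left_cancel₀ hne h'
  have hsx : 0 < Real.sin x := Real.sin_pos_of_pos_of_lt_pi hx0 hxπ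
  have ha : 0 < a := lt_of_le_of_lt (by positivity) h1
  have hcx : 0 < Real.cos x := by nlinarith
  have hxlt : x < π / 2 := by
    by_contra h
    push_neg at h
    have := Real.cos_nonpos_of_pi_div_two_le_of_le h (by linarith)
    linarith
  have htan : x < Real.tan x := Real.lt_tan hx0 hxlt
  have htan2 : Real.tan x = 2 / a := by
    rw [Real.tan_eq_sin_div_cos]
    field_simp
    linarith [heq2]
  have hax : a * x < 2 := by
    rw [htan2] at htan
    calc a * x < a * (2 / a) := by exact mul_lt_mul_of_pos_left htan ha
    _ = 2 := by field_simp
  have key : (m : ℝ) * π / 2 * x < 2 :=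
    lt_of_le_of_lt (mul_le_mul_of_nonneg_right h1.le hx0.le) hax
  have haeq : a = (m : ℝ) * π / 2 + x / 2 := by simp only [hxdef]; ring
  nlinarith [key, hxlt, hx0, sq_nonneg x]

/-- The Neumann eigenvalues `λ_n = −ν_n²` are strictly decreasing with gap
`ν_{n+1}² − ν_n² ≥ nπ²/2 − C`. -/
theorem neumann_eigenvalue_gap (ν lam : ℕ → ℝ)
    (hν : ∀ k : ℕ, 1 ≤ k → ν k ∈ Ioo ((((k : ℝ)) - 1) * π / 2) (((k : ℝ)) * π / 2) ∧
      ν k * Real.sin (2 * ν k) = 2 * Real.cos (2 * ν k))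
    (hlam : ∀ n : ℕ, 1 ≤ n → lam n = -(ν n) ^ 2) :
    StrictAntiOn lam (Set.Ici 1) ∧
    ∃ C > 0, ∀ n : ℕ, 1 ≤ n →
      (ν (n + 1)) ^ 2 - (ν n) ^ 2 ≥ (n : ℝ) * π ^ 2 / 2 - C := by
  have hπ := Real.pi_pos
  constructor
  · intro m hm n hn hmn
    simp only [Set.mem_Ici] at hm hn
    rw [hlam m hm, hlam n hn]
    have h1 := (hν m hm).1
    have h2 := (hν n hn).1
    have hm1 : (1 : ℝ) ≤ m := by exact_mod_cast hm
    have hm0 : 0 ≤ ν m := le_trans (by nlinarith) h1.1.le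
    have hcast : (m : ℝ) ≤ (n : ℝ) - 1 := by
      have : m + 1 ≤ n := hmn
      have := (Nat.cast_le (α := ℝ)).mpr this
      push_cast at this
      linarith
    have hlt : ν m < ν n := by
      calc ν m < (m : ℝ) * π / 2 := h1.2
      _ ≤ ((n : ℝ) - 1) * π / 2 := by nlinarith
      _ < ν n := h2.1
    nlinarith
  · refine ⟨π ^ 2 + 3, by positivity, fun n hn => ?_⟩
    obtain ⟨m, rfl⟩ : ∃ m, n = m + 1 := ⟨n - 1, (Nat.succ_pred_eq_of_pos hn).symm⟩
    have h1 := (hν (m + 1) (by omega)).1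
    have h2 := (hν (m + 2) (by omega)).1
    have heq := (hν (m + 1) (by omega)).2
    have hb : ν (m + 1) ^ 2 < ((m : ℝ) * π / 2) ^ 2 + 2 + π ^ 2 / 16 := by
      apply neumann_aux _ m _ _ heq
      · have := h1.1; push_cast at this ⊢; linarith
      · have := h1.2; push_cast at this ⊢; linarith
    have hlow : ((m : ℝ) + 1) * π / 2 < ν (m + 2) := by
      have := h2.1; push_cast at this ⊢; linarith
    have hlow0 : 0 ≤ ((m : ℝ) + 1) * π / 2 := by positivity
    have hsq : (((m : ℝ) + 1) * π / 2) ^ 2 < ν (m + 2) ^ 2 := by nlinarith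
    push_cast
    nlinarith [hb, hsq]
end

section
/- Let μ and ν be two distinct positive real numbers each satisfying μ sin(2μ) = 2 cos(2μ) and ν sin(2ν) = 2 cos(2ν) (so cos μ ≠ 0 and cos ν ≠ 0). Then ∫_{−1}^{0} sin(μ(1+x)) sin(ν(1+x)) dx + tan(μ) tan(ν) ∫_{0}^{1} cos(μ(x−1)) cos(ν(x−1)) dx + sin(μ) sin(ν) = 0. -/
/-!
After the substitutions `t = 1 + x` and `t = 1 - x` both integrals live on `[0, 1]`, where
`sin (μ t) sin (ν t)` and `cos (μ t) cos (ν t)` have elementary antiderivatives: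
`(μ² - ν²) ∫ sin sin = ν sin μ cos ν - μ cos μ sin ν` and
`(μ² - ν²) ∫ cos cos = μ sin μ cos ν - ν cos μ sin ν`.
By the double-angle formulas the characteristic equation reads `μ sin μ cos μ = cos² μ - sin² μ`; using it
for `μ` and for `ν`, `(μ² - ν²) cos μ cos ν` times the inner product collapses to
`(ν² - μ²) sin μ cos μ sin ν cos ν + (μ² - ν²) sin μ cos μ sin ν cos ν = 0`.
-/

open Real Set

namespace Real

theorem sq_sub_sq_mul_integral_sin_mul_sin (a b L : ℝ) :
    (a ^ 2 - b ^ 2) * ∫ t in (0 : ℝ)..L, sin (a * t) * sin (b * t) =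
      b * sin (a * L) * cos (b * L) - a * cos (a * L) * sin (b * L) := by
  have hderiv : ∀ t ∈ uIcc 0 L, HasDerivAt
      (fun t => b * sin (a * t) * cos (b * t) - a * cos (a * t) * sin (b * t))
      ((a ^ 2 - b ^ 2) * (sin (a * t) * sin (b * t))) t := by
    intro t _
    have hsa := ((hasDerivAt_id' t).const_mul a).sin
    have hca := ((hasDerivAt_id' t).const_mul a).cos
    have hsb := ((hasDerivAt_id' t).const_mul b).sin
    have hcb := ((hasDerivAt_id' t).const_mul b).cos
    exact (((hsa.const_mul b).mul hcb).sub ((hca.const_mul a).mul hsb)).congr_deriv (by ring)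
  rw [← intervalIntegral.integral_const_mul,
    intervalIntegral.integral_eq_sub_of_hasDerivAt hderiv
      (Continuous.intervalIntegrable (by fun_prop) _ _)]
  simp

theorem sq_sub_sq_mul_integral_cos_mul_cos (a b L : ℝ) :
    (a ^ 2 - b ^ 2) * ∫ t in (0 : ℝ)..L, cos (a * t) * cos (b * t) =
      a * sin (a * L) * cos (b * L) - b * cos (a * L) * sin (b * L) := by
  have hderiv : ∀ t ∈ uIcc 0 L, HasDerivAt
      (fun t => a * sin (a * t) * cos (b * t) - b * cos (a * t) * sin (b * t))
      ((a ^ 2 - b ^ 2) * (cos (a * t) * cos (b * t))) t := by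
    intro t _
    have hsa := ((hasDerivAt_id' t).const_mul a).sin
    have hca := ((hasDerivAt_id' t).const_mul a).cos
    have hsb := ((hasDerivAt_id' t).const_mul b).sin
    have hcb := ((hasDerivAt_id' t).const_mul b).cos
    exact (((hsa.const_mul a).mul hcb).sub ((hca.const_mul b).mul hsb)).congr_deriv (by ring)
  rw [← intervalIntegral.integral_const_mul,
    intervalIntegral.integral_eq_sub_of_hasDerivAt hderiv
      (Continuous.intervalIntegrable (by fun_prop) _ _)]
  simp

theorem integral_sin_mul_sin_one_add (a b : ℝ) :
    ∫ x in (-1 : ℝ)..0, sin (a * (1 + x)) * sin (b * (1 + x)) =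
      ∫ t in (0 : ℝ)..1, sin (a * t) * sin (b * t) := by
  simpa using intervalIntegral.integral_comp_add_left
    (fun t => sin (a * t) * sin (b * t)) (1 : ℝ) (a := -1) (b := 0)

theorem integral_cos_mul_cos_sub_one (a b : ℝ) :
    ∫ x in (0 : ℝ)..1, cos (a * (x - 1)) * cos (b * (x - 1)) =
      ∫ t in (0 : ℝ)..1, cos (a * t) * cos (b * t) := by
  have hreflect := intervalIntegral.integral_comp_sub_left
    (fun t => cos (a * t) * cos (b * t)) (1 : ℝ) (a := 0) (b := 1)
  simp only [sub_self, sub_zero] at hreflect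
  rw [← hreflect]
  congr 1 with x
  rw [← cos_neg (a * (x - 1)), ← cos_neg (b * (x - 1))]
  ring_nf

end Real

section CharacteristicEquation

variable {μ : ℝ} (h : μ * sin (2 * μ) = 2 * cos (2 * μ))
include h

theorem mul_sin_mul_cos_eq_cos_sq_sub_sin_sq :
    μ * sin μ * cos μ = cos μ ^ 2 - sin μ ^ 2 := by
  rw [sin_two_mul, cos_two_mul'] at h
  linarith

theorem cos_ne_zero_of_mul_sin_two_mul_eq : cos μ ≠ 0 := by
  intro hcos
  have := mul_sin_mul_cos_eq_cos_sq_sub_sin_sq h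
  rw [hcos] at this
  nlinarith [sin_sq_add_cos_sq μ]

end CharacteristicEquation

/-- Orthogonality in `H = L²(−1,0) × L²(0,1) × ℝ` of Neumann eigenvectors associated with
distinct roots of the characteristic equation `μ sin(2μ) = 2 cos(2μ)`. -/
theorem neumann_eigenvectors_orthogonal (μ ν : ℝ) (hμ : 0 < μ) (hν : 0 < ν) (hne : μ ≠ ν)
    (hcμ : μ * Real.sin (2 * μ) = 2 * Real.cos (2 * μ))
    (hcν : ν * Real.sin (2 * ν) = 2 * Real.cos (2 * ν)) :
    (∫ x in (-1 : ℝ)..0, Real.sin (μ * (1 + x)) * Real.sin (ν * (1 + x))) +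
    Real.tan μ * Real.tan ν *
      (∫ x in (0 : ℝ)..1, Real.cos (μ * (x - 1)) * Real.cos (ν * (x - 1))) +
    Real.sin μ * Real.sin ν = 0 := by
  have hsq : μ ^ 2 - ν ^ 2 ≠ 0 := by
    rw [sq_sub_sq]
    exact mul_ne_zero (by positivity) (sub_ne_zero.mpr hne)
  have hI := sq_sub_sq_mul_integral_sin_mul_sin μ ν 1
  have hJ := sq_sub_sq_mul_integral_cos_mul_cos μ ν 1
  simp only [mul_one] at hI hJ
  have hcosμ := cos_ne_zero_of_mul_sin_two_mul_eq hcμ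
  have hcosν := cos_ne_zero_of_mul_sin_two_mul_eq hcν
  have hμ' := mul_sin_mul_cos_eq_cos_sq_sub_sin_sq hcμ
  have hν' := mul_sin_mul_cos_eq_cos_sq_sub_sin_sq hcν
  rw [integral_sin_mul_sin_one_add, integral_cos_mul_cos_sub_one]
  -- opaque `I`, `J` keep `field_simp` from reordering the integrands
  set I := ∫ t in (0 : ℝ)..1, sin (μ * t) * sin (ν * t)
  set J := ∫ t in (0 : ℝ)..1, cos (μ * t) * cos (ν * t)
  clear_value I J
  rw [tan_eq_sin_div_cos, tan_eq_sin_div_cos]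
  field_simp
  apply mul_left_cancel₀ hsq
  linear_combination cos μ * cos ν * hI + sin μ * sin ν * hJ -
    ν * sin μ * cos μ * hν' + μ * sin ν * cos ν * hμ'
end

section
/- Let ν_k denote, for each integer k ≥ 1, the unique solution in ((k−1)π/2, kπ/2) of μ sin(2μ) = 2 cos(2μ). Then lim_{k→∞} 2 ( ∫_{−1}^{0} sin²(ν_{2k−1}(x+1)) dx + tan²(ν_{2k−1}) ∫_{0}^{1} cos²(ν_{2k−1}(x−1)) dx + sin²(ν_{2k−1}) ) = 1 and lim_{k→∞} 2 ( cot²(ν_{2k}) ∫_{−1}^{0} sin²(ν_{2k}(x+1)) dx + ∫_{0}^{1} cos²(ν_{2k}(x−1)) dx + cos²(ν_{2k}) ) = 1. -/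
/-!
Put `c = cos (2ν)`. The two integrals equal `1/2 ∓ sin (2ν) / (4ν)`, and `tan² ν`, `cot² ν`,
`sin² ν`, `cos² ν` are rational in `c`. Eliminating `sin (2ν)` with the characteristic equation
`ν sin (2ν) = 2c` and `sin² + cos² = 1` turns `‖φ_{2k-1}‖²` into `g c` and `‖φ_{2k}‖²` into
`g (-c)`, where `g a = 1 + (1 - a) / 2 + (1 - a) / (1 + a)`. Since `2ν_k ∈ ((k-1)π, kπ)`, `c` has
the sign of `(-1)^(k+1)`, so both squared norms equal `g |c|`. Finally `sin (2ν) = 2c / ν → 0`,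
hence `|c| → 1` and `g |c| → g 1 = 1`.
-/

open Real Set Filter Topology

lemma integral_sin_mul_add_one_sq {μ : ℝ} (hμ : μ ≠ 0) :
    ∫ x in (-1 : ℝ)..0, sin (μ * (x + 1)) ^ 2 = 1 / 2 - sin (2 * μ) / (4 * μ) := by
  simp_rw [mul_add, mul_one]
  rw [intervalIntegral.integral_comp_mul_add (fun x => sin x ^ 2) hμ, integral_sin_sq,
    sin_two_mul]
  simp only [mul_neg, mul_one, neg_add_cancel, mul_zero, zero_add, sin_zero, cos_zero, smul_eq_mul]
  field_simp
  ring

lemma integral_cos_mul_sub_one_sq {μ : ℝ} (hμ : μ ≠ 0) :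
    ∫ x in (0 : ℝ)..1, cos (μ * (x - 1)) ^ 2 = 1 / 2 + sin (2 * μ) / (4 * μ) := by
  simp_rw [mul_sub, mul_one, sub_eq_add_neg]
  rw [intervalIntegral.integral_comp_mul_add (fun x => cos x ^ 2) hμ, integral_cos_sq,
    sin_two_mul]
  simp only [mul_zero, zero_add, mul_one, add_neg_cancel, sin_zero, cos_zero, sin_neg, cos_neg,
    smul_eq_mul]
  field_simp
  ring

lemma tan_sq_eq_one_sub_cos_div_one_add_cos (x : ℝ) :
    tan x ^ 2 = (1 - cos (2 * x)) / (1 + cos (2 * x)) := by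
  rw [tan_eq_sin_div_cos, div_pow, sin_sq_eq_half_sub, cos_sq, ← sub_div, ← add_div,
    div_div_div_cancel_right₀ two_ne_zero]

lemma cot_sq_eq_one_add_cos_div_one_sub_cos (x : ℝ) :
    cot x ^ 2 = (1 + cos (2 * x)) / (1 - cos (2 * x)) := by
  rw [cot_eq_cos_div_sin, div_pow, sin_sq_eq_half_sub, cos_sq, ← sub_div, ← add_div,
    div_div_div_cancel_right₀ two_ne_zero]

/-- `‖φ_{2k-1}‖²` as a function of `μ = ν_{2k-1}`. -/
noncomputable def oddEigenvectorNormSq (μ : ℝ) : ℝ :=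
  2 * ((∫ x in (-1 : ℝ)..0, sin (μ * (x + 1)) ^ 2) +
    tan μ ^ 2 * (∫ x in (0 : ℝ)..1, cos (μ * (x - 1)) ^ 2) + sin μ ^ 2)

/-- `‖φ_{2k}‖²` as a function of `μ = ν_{2k}`. -/
noncomputable def evenEigenvectorNormSq (μ : ℝ) : ℝ :=
  2 * (cot μ ^ 2 * (∫ x in (-1 : ℝ)..0, sin (μ * (x + 1)) ^ 2) +
    (∫ x in (0 : ℝ)..1, cos (μ * (x - 1)) ^ 2) + cos μ ^ 2)

lemma oddEigenvectorNormSq_eq {μ : ℝ} (hμ : μ ≠ 0) (hc : 1 + cos (2 * μ) ≠ 0)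
    (heq : μ * sin (2 * μ) = 2 * cos (2 * μ)) :
    oddEigenvectorNormSq μ =
      1 + (1 - cos (2 * μ)) / 2 + (1 - cos (2 * μ)) / (1 + cos (2 * μ)) := by
  rw [oddEigenvectorNormSq, integral_sin_mul_add_one_sq hμ, integral_cos_mul_sub_one_sq hμ,
    tan_sq_eq_one_sub_cos_div_one_add_cos, sin_sq_eq_half_sub]
  field_simp
  linear_combination 4 * sin (2 * μ) * heq - 4 * μ * sin_sq_add_cos_sq (2 * μ)

lemma evenEigenvectorNormSq_eq {μ : ℝ} (hμ : μ ≠ 0) (hc : 1 - cos (2 * μ) ≠ 0)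
    (heq : μ * sin (2 * μ) = 2 * cos (2 * μ)) :
    evenEigenvectorNormSq μ =
      1 + (1 + cos (2 * μ)) / 2 + (1 + cos (2 * μ)) / (1 - cos (2 * μ)) := by
  rw [evenEigenvectorNormSq, integral_sin_mul_add_one_sq hμ, integral_cos_mul_sub_one_sq hμ,
    cot_sq_eq_one_add_cos_div_one_sub_cos, cos_sq]
  field_simp
  linear_combination 4 * sin (2 * μ) * heq - 4 * μ * sin_sq_add_cos_sq (2 * μ)

lemma sin_two_mul_pos_of_odd {n : ℕ} (hn : Odd n) {μ : ℝ}
    (hμ : μ ∈ Ioo ((n - 1) * π / 2) (n * π / 2)) : 0 < sin (2 * μ) := by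
  obtain ⟨j, rfl⟩ := hn
  push_cast at hμ
  rw [← sin_sub_nat_mul_two_pi _ j]
  apply sin_pos_of_pos_of_lt_pi <;> linarith [hμ.1, hμ.2]

lemma sin_two_mul_neg_of_even {n : ℕ} (hn : Even n) {μ : ℝ}
    (hμ : μ ∈ Ioo ((n - 1) * π / 2) (n * π / 2)) : sin (2 * μ) < 0 := by
  obtain ⟨j, rfl⟩ := hn
  push_cast at hμ
  rw [← sin_sub_nat_mul_two_pi _ j]
  apply sin_neg_of_neg_of_neg_pi_lt <;> linarith [hμ.1, hμ.2]

lemma pos_of_mem_Ioo {n : ℕ} (hn : n ≠ 0) {μ : ℝ}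
    (hμ : μ ∈ Ioo ((n - 1) * π / 2) (n * π / 2)) : 0 < μ := by
  have : (1 : ℝ) ≤ n := mod_cast Nat.one_le_iff_ne_zero.2 hn
  have := pi_pos
  nlinarith [hμ.1]

lemma cos_two_mul_pos_of_odd {n : ℕ} (hn : Odd n) {μ : ℝ}
    (hμ : μ ∈ Ioo ((n - 1) * π / 2) (n * π / 2))
    (heq : μ * sin (2 * μ) = 2 * cos (2 * μ)) :
    0 < cos (2 * μ) := by
  linarith [mul_pos (pos_of_mem_Ioo hn.pos.ne' hμ) (sin_two_mul_pos_of_odd hn hμ)]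

lemma cos_two_mul_neg_of_even {n : ℕ} (hn : Even n) (hn₀ : n ≠ 0) {μ : ℝ}
    (hμ : μ ∈ Ioo ((n - 1) * π / 2) (n * π / 2))
    (heq : μ * sin (2 * μ) = 2 * cos (2 * μ)) :
    cos (2 * μ) < 0 := by
  linarith [mul_neg_of_pos_of_neg (pos_of_mem_Ioo hn₀ hμ) (sin_two_mul_neg_of_even hn hμ)]

lemma tendsto_abs_cos_two_mul {α : Type*} {l : Filter α} {μ : α → ℝ}
    (hμ : Tendsto μ l atTop)
    (heq : ∀ᶠ i in l, μ i * sin (2 * μ i) = 2 * cos (2 * μ i)) :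
    Tendsto (fun i => |cos (2 * μ i)|) l (𝓝 1) := by
  have hsin : Tendsto (fun i => sin (2 * μ i)) l (𝓝 0) := by
    refine squeeze_zero_norm' ?_
      (tendsto_const_nhds.div_atTop hμ : Tendsto (fun i => 2 / μ i) l (𝓝 0))
    filter_upwards [heq, hμ.eventually_gt_atTop 0] with i hi hpos
    calc ‖sin (2 * μ i)‖ = |μ i * sin (2 * μ i)| / μ i := by
          rw [abs_mul, abs_of_pos hpos, norm_eq_abs]
          field_simp
      _ = 2 * |cos (2 * μ i)| / μ i := by rw [hi, abs_mul, abs_two]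
      _ ≤ 2 / μ i := by gcongr; grw [abs_cos_le_one, mul_one]
  have := ((tendsto_const_nhds (x := (1 : ℝ))).sub (hsin.pow 2)).sqrt
  simp only [ne_eq, OfNat.ofNat_ne_zero, not_false_eq_true, zero_pow, sub_zero, sqrt_one] at this
  refine this.congr fun i => ?_
  rw [← cos_sq', sqrt_sq_eq_abs]

lemma tendsto_atTop_of_half_pi_mul_lt {ν : ℕ → ℝ}
    (hν : ∀ k : ℕ, 1 ≤ k → ((k : ℝ) - 1) * π / 2 < ν k) : Tendsto ν atTop atTop := by
  refine tendsto_atTop_mono' atTop (eventually_atTop.2 ⟨1, fun k hk => (hν k hk).le⟩) ?_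
  exact ((tendsto_atTop_add_const_right _ (-1) tendsto_natCast_atTop_atTop).atTop_mul_const
    pi_pos).atTop_div_const two_pos

/-- The normalized Neumann eigenvectors are asymptotically normalized:
the squared `H`-norms of `φ_{2k−1}` and `φ_{2k}` tend to `1`. -/
theorem neumann_eigenvectors_asymptotically_normalized (ν : ℕ → ℝ)
    (hν : ∀ k : ℕ, 1 ≤ k → ν k ∈ Ioo ((((k : ℝ)) - 1) * π / 2) (((k : ℝ)) * π / 2) ∧
      ν k * Real.sin (2 * ν k) = 2 * Real.cos (2 * ν k)) :
    Tendsto (fun k : ℕ =>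
      2 * ((∫ x in (-1 : ℝ)..0, Real.sin (ν (2 * k - 1) * (x + 1)) ^ 2) +
        Real.tan (ν (2 * k - 1)) ^ 2 *
          (∫ x in (0 : ℝ)..1, Real.cos (ν (2 * k - 1) * (x - 1)) ^ 2) +
        Real.sin (ν (2 * k - 1)) ^ 2)) atTop (nhds 1) ∧
    Tendsto (fun k : ℕ =>
      2 * (Real.cot (ν (2 * k)) ^ 2 *
          (∫ x in (-1 : ℝ)..0, Real.sin (ν (2 * k) * (x + 1)) ^ 2) +
        (∫ x in (0 : ℝ)..1, Real.cos (ν (2 * k) * (x - 1)) ^ 2) +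
        Real.cos (ν (2 * k)) ^ 2)) atTop (nhds 1) := by
  show Tendsto (fun k => oddEigenvectorNormSq (ν (2 * k - 1))) atTop (𝓝 1) ∧
    Tendsto (fun k => evenEigenvectorNormSq (ν (2 * k))) atTop (𝓝 1)
  have hν_top := tendsto_atTop_of_half_pi_mul_lt fun k hk => (hν k hk).1.1
  have hcos :=
    tendsto_abs_cos_two_mul hν_top (eventually_atTop.2 ⟨1, fun k hk => (hν k hk).2⟩)
  have hg : Tendsto (fun a : ℝ => 1 + (1 - a) / 2 + (1 - a) / (1 + a)) (𝓝 1) (𝓝 1) := by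
    have : ContinuousAt (fun a : ℝ => 1 + (1 - a) / 2 + (1 - a) / (1 + a)) 1 := by
      fun_prop (disch := norm_num)
    simpa using this.tendsto
  have hodd : Tendsto (fun k : ℕ => 2 * k - 1) atTop atTop :=
    tendsto_atTop_atTop.2 fun b => ⟨b + 1, fun k hk => by omega⟩
  have heven : Tendsto (fun k : ℕ => 2 * k) atTop atTop :=
    tendsto_atTop_atTop.2 fun b => ⟨b, fun k hk => by omega⟩
  constructor
  · refine (hg.comp (hcos.comp hodd)).congr' ?_
    filter_upwards [eventually_ge_atTop 1] with k hk
    obtain ⟨hmem, heq⟩ := hν (2 * k - 1) (by omega)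
    have hc := cos_two_mul_pos_of_odd ⟨k - 1, by omega⟩ hmem heq
    simp only [Function.comp_apply, abs_of_pos hc]
    rw [oddEigenvectorNormSq_eq (pos_of_mem_Ioo (by omega) hmem).ne' (by linarith) heq]
  · refine (hg.comp (hcos.comp heven)).congr' ?_
    filter_upwards [eventually_ge_atTop 1] with k hk
    obtain ⟨hmem, heq⟩ := hν (2 * k) (by omega)
    have hc := cos_two_mul_neg_of_even (even_two_mul k) (by omega) hmem heq
    simp only [Function.comp_apply, abs_of_neg hc]
    rw [evenEigenvectorNormSq_eq (pos_of_mem_Ioo (by omega) hmem).ne' (by linarith) heq,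
      sub_neg_eq_add, ← sub_eq_add_neg]
end
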